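/- A lattice polytope P is Fano if and only if its combinatorial mutation mut_w(P,F) is Fano. -/

import Mathlib

open Set Pointwise

noncomputable section

/-- the real vector space `N_ℝ = N ⊗ ℝ` for the lattice `N ≅ ℤᵈ` -/
abbrev RVec (d : ℕ) := Fin d → ℝ

/-- the inclusion of the lattice `N = ℤᵈ` into `N_ℝ` -/
def toR {d : ℕ} (u : Fin d → ℤ) : RVec d := fun i => (u i : ℝ)

/-- the pairing `⟨w, u⟩` of `w ∈ M = Hom(N, ℤ)` with `u ∈ N_ℝ` -/
def pairR {d : ℕ} (w : Fin d → ℤ) (u : RVec d) : ℝ := ∑ i, (w i : ℝ) * u i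

/-- `P` is a lattice polytope: the convex hull of finitely many lattice points. -/
def IsLatticePolytope {d : ℕ} (P : Set (RVec d)) : Prop :=
  ∃ S : Finset (Fin d → ℤ), S.Nonempty ∧ P = convexHull ℝ (toR '' ↑S)

/-- `w ∈ M ≅ ℤᵈ` is a primitive lattice vector -/
def IsPrimitive {d : ℕ} (w : Fin d → ℤ) : Prop := Finset.univ.gcd w = 1

/-- `w_h(P)`: the convex hull of the lattice points of `P` at height `h` with
respect to `w` -/
def heightSlice {d : ℕ} (w : Fin d → ℤ) (h : ℤ) (P : Set (RVec d)) : Set (RVec d) :=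
  convexHull ℝ (toR '' {u : Fin d → ℤ | toR u ∈ P ∧ pairR w (toR u) = (h : ℝ)})

/-- `F` is a lattice polytope lying at height `0` with respect to `w`
(a candidate factor of a polytope with respect to `w`). -/
def IsFactorShape {d : ℕ} (w : Fin d → ℤ) (F : Set (RVec d)) : Prop :=
  IsLatticePolytope F ∧ ∀ x ∈ F, pairR w x = 0

/-- The family `G` witnesses that `F` is a factor of `P` with respect to `w`:
for every negative height `h`, `G h` is a possibly empty lattice polytope satisfying
the sandwich condition `{u ∈ 𝒱(P) : ⟨w,u⟩ = h} ⊆ G h + (−h)·F ⊆ w_h(P)`,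
where `𝒱(P)` is the set of vertices (extreme points) of `P`, `+` is the Minkowski
sum (with `Q + ∅ = ∅`), and `(−h)·F` is the `(−h)`-fold Minkowski sum of `F`. -/
def IsMutationWitness {d : ℕ} (w : Fin d → ℤ) (F : Set (RVec d))
    (G : ℤ → Set (RVec d)) (P : Set (RVec d)) : Prop :=
  ∀ h : ℤ, h < 0 →
    (G h = ∅ ∨ IsLatticePolytope (G h)) ∧
    {x | x ∈ Set.extremePoints ℝ P ∧ pairR w x = (h : ℝ)} ⊆ G h + (-h : ℝ) • F ∧
    G h + (-h : ℝ) • F ⊆ heightSlice w h P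

/-- the combinatorial mutation `mut_w(P, F)` of `P` given by the vector `w`, the
factor `F` and the polytopes `{G_h}`:
`mut_w(P,F) = conv( ⋃_{h<0} G_h ∪ ⋃_{h≥0} (w_h(P) + h·F) )` -/
def mutation {d : ℕ} (w : Fin d → ℤ) (F : Set (RVec d)) (G : ℤ → Set (RVec d))
    (P : Set (RVec d)) : Set (RVec d) :=
  convexHull ℝ ((⋃ (h : ℤ) (_ : h < 0), G h) ∪
    ⋃ h : ℕ, (heightSlice w (h : ℤ) P + (h : ℝ) • F))

/-- `P` is a Fano polytope: the origin lies in the strict interior of `P` and every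
vertex of `P` is a primitive lattice point. -/
def IsFano {d : ℕ} (P : Set (RVec d)) : Prop :=
  (0 : RVec d) ∈ interior P ∧
    ∀ x ∈ Set.extremePoints ℝ P, ∃ u : Fin d → ℤ, toR u = x ∧ IsPrimitive u

/-! The mutation acts on linear functionals by the piecewise linear bijection
`ψ y = y + (max_F y) • w`: the maximum of `y` over `mut_w(P, F)` equals the maximum of `ψ y`
over `P`. Since `ψ y = 0` only for `y = 0`, the support functions of `P` and of its mutation detect
`0 ∈ interior` simultaneously. Comparing the maximisers of an exposing functional `y` on the
mutation with those of `ψ y` on `P` (and conversely) shows that every vertex of either polytope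
is the image of a vertex of the other under a shear `x ↦ x ± ⟨w, x⟩ f` with `f` a lattice vertex
of `F`. As `⟨w, f⟩ = 0`, these shears are unimodular and preserve primitivity. -/

section ConvexGeometry

variable {E : Type*} [AddCommGroup E] [Module ℝ E]

def IsPolytope (K : Set E) : Prop := ∃ T : Set E, T.Finite ∧ convexHull ℝ T = K

theorem IsPolytope.convex {K : Set E} (hK : IsPolytope K) : Convex ℝ K := by
  obtain ⟨T, -, rfl⟩ := hK
  exact convex_convexHull ℝ T

theorem IsPolytope.add {K L : Set E} (hK : IsPolytope K) (hL : IsPolytope L) :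
    IsPolytope (K + L) := by
  obtain ⟨S, hS, rfl⟩ := hK
  obtain ⟨T, hT, rfl⟩ := hL
  exact ⟨S + T, hS.add hT, convexHull_add S T⟩

theorem IsPolytope.smul {K : Set E} (hK : IsPolytope K) (a : ℝ) : IsPolytope (a • K) := by
  obtain ⟨T, hT, rfl⟩ := hK
  exact ⟨a • T, hT.smul_set, convexHull_smul a T⟩

theorem isPolytope_convexHull_iUnion {ι : Type*} {K : ι → Set E}
    (hK : ∀ i, IsPolytope (convexHull ℝ (K i))) (hfin : {i | (K i).Nonempty}.Finite) :
    IsPolytope (convexHull ℝ (⋃ i, K i)) := by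
  choose T hT hTK using hK
  have hsupp : ⋃ i, T i = ⋃ i ∈ {i | (K i).Nonempty}, T i := by
    refine Set.iUnion_congr fun i => ?_
    by_cases hi : (K i).Nonempty
    · simp [hi]
    · have hTi : T i = ∅ := by
        rw [← convexHull_eq_empty (𝕜 := ℝ), hTK, ← Set.not_nonempty_iff_eq_empty]
        exact fun hne => hi (convexHull_nonempty_iff.mp hne)
      simp [hi, hTi]
  refine ⟨⋃ i, T i, hsupp ▸ hfin.biUnion fun i _ => hT i, le_antisymm ?_ ?_⟩
  · exact convexHull_min (Set.iUnion_subset fun i => (subset_convexHull ℝ (T i)).trans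
      ((hTK i).le.trans (convexHull_mono (Set.subset_iUnion K i)))) (convex_convexHull ℝ _)
  · exact convexHull_min (Set.iUnion_subset fun i => (subset_convexHull ℝ (K i)).trans
      ((hTK i).ge.trans (convexHull_mono (Set.subset_iUnion T i)))) (convex_convexHull ℝ _)

theorem mem_extremePoints_of_add_smul_mem {K F : Set E} {a f : E} {t : ℝ} (ht : t ≠ 0)
    (hF : ∀ f' ∈ F, a + t • f' ∈ K) (hf : f ∈ F) (hx : a + t • f ∈ K.extremePoints ℝ) :
    f ∈ F.extremePoints ℝ := by
  refine ⟨hf, fun x₁ h₁ x₂ h₂ hseg => ?_⟩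
  obtain ⟨α, β, hα, hβ, hαβ, hcomb⟩ := hseg
  have hseg' : a + t • f ∈ openSegment ℝ (a + t • x₁) (a + t • x₂) :=
    ⟨α, β, hα, hβ, hαβ, by rw [← hcomb]; linear_combination (norm := module) hαβ • a⟩
  exact smul_right_injective E ht (add_left_cancel (hx.2 (hF x₁ h₁) (hF x₂ h₂) hseg'))

variable [TopologicalSpace E] [IsTopologicalAddGroup E] [ContinuousSMul ℝ E]

theorem IsPolytope.isCompact {K : Set E} (hK : IsPolytope K) : IsCompact K := by
  obtain ⟨T, hT, rfl⟩ := hK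
  exact hT.isCompact_convexHull (𝕜 := ℝ)

variable [LocallyConvexSpace ℝ E] [T2Space E]

theorem IsCompact.exists_mem_extremePoints_isMaxOn {K : Set E} (hK : IsCompact K)
    (hne : K.Nonempty) (f : StrongDual ℝ E) : ∃ x ∈ K.extremePoints ℝ, IsMaxOn f K x := by
  obtain ⟨z, hzK, hz⟩ := hK.exists_isMaxOn hne f.continuous.continuousOn
  have hexp : IsExposed ℝ K (f.toExposed K) := ContinuousLinearMap.toExposed.isExposed
  obtain ⟨x, hx⟩ := (hexp.isCompact hK).extremePoints_nonempty ⟨z, hzK, hz⟩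
  exact ⟨x, hexp.isExtreme.extremePoints_subset_extremePoints hx, hx.1.2⟩

theorem IsPolytope.extremePoints_subset_exposedPoints {K : Set E} (hK : IsPolytope K) :
    K.extremePoints ℝ ⊆ K.exposedPoints ℝ := by
  obtain ⟨T, hT, rfl⟩ := hK
  intro x hx
  have hxT : x ∈ T := extremePoints_convexHull_subset hx
  have hxT' : x ∉ convexHull ℝ (T \ {x}) := fun hmem =>
    (extremePoints_convexHull_subset (inter_extremePoints_subset_extremePoints_of_subset
      (convexHull_mono Set.sdiff_subset) ⟨hmem, hx⟩)).2 rfl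
  obtain ⟨l, u, hlu, hux⟩ := geometric_hahn_banach_closed_point (convex_convexHull ℝ _)
    (hT.sdiff.isCompact_convexHull (𝕜 := ℝ)).isClosed hxT'
  refine ⟨extremePoints_subset hx, l, fun y hy => ?_⟩
  rcases (T \ {x}).eq_empty_or_nonempty with hempty | hne
  · have hyx : y = x := by
      have hTx : T ⊆ {x} := Set.sdiff_eq_empty.mp hempty
      simpa using convexHull_mono hTx hy
    exact ⟨by rw [hyx], fun _ => hyx⟩
  rw [← Set.insert_eq_of_mem hxT, ← Set.insert_sdiff_singleton, convexHull_insert hne] at hy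
  obtain ⟨x', hx', z, hz, α, β, hα, hβ, hαβ, rfl⟩ := mem_convexJoin.mp hy
  subst x'
  have hlz := (hlu z hz).trans hux
  simp only [map_add, map_smul, smul_eq_mul]
  obtain rfl : α = 1 - β := by linarith
  have hgap := mul_nonneg hβ (sub_nonneg.mpr hlz.le)
  refine ⟨by nlinarith, fun hle => ?_⟩
  have hgap0 : β * (l x - l z) = 0 := le_antisymm (by linarith) hgap
  obtain rfl : β = 0 := (mul_eq_zero.mp hgap0).resolve_right (sub_pos.mpr hlz).ne'
  simp

end ConvexGeometry

section Interior

variable {E : Type*} [NormedAddCommGroup E] [NormedSpace ℝ E] [FiniteDimensional ℝ E]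

theorem Convex.exists_ne_zero_forall_le_of_notMem_interior {K : Set E} (hK : Convex ℝ K)
    (hne : K.Nonempty) {x : E} (hx : x ∉ interior K) :
    ∃ f : StrongDual ℝ E, f ≠ 0 ∧ ∀ a ∈ K, f a ≤ f x := by
  rcases (interior K).eq_empty_or_nonempty with hint | hint
  · obtain ⟨a₀, ha₀⟩ := hne
    have hspan : affineSpan ℝ K ≠ ⊤ := fun h =>
      (hK.interior_nonempty_iff_affineSpan_eq_top.mpr h).ne_empty hint
    have hdir : (affineSpan ℝ K).direction < ⊤ := lt_top_iff_ne_top.mpr fun h =>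
      hspan ((AffineSubspace.direction_eq_top_iff_of_nonempty
        ((affineSpan_nonempty ℝ).mpr ⟨a₀, ha₀⟩)).mp h)
    obtain ⟨g, hg0, hker⟩ := Submodule.exists_le_ker_of_lt_top _ hdir
    have hconst : ∀ a ∈ K, g a = g a₀ := fun a ha => by
      have hdir := hker (AffineSubspace.vsub_mem_direction (subset_affineSpan ℝ K ha)
        (subset_affineSpan ℝ K ha₀))
      simpa [sub_eq_zero] using hdir
    set f := LinearMap.toContinuousLinearMap g
    have hf0 : f ≠ 0 := fun h => hg0 (by ext v; simpa [f] using congrArg (· v) h)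
    rcases le_total (g a₀) (g x) with h | h
    · exact ⟨f, hf0, fun a ha => by simpa [f, hconst a ha] using h⟩
    · exact ⟨-f, neg_ne_zero.mpr hf0, fun a ha => by simpa [f, hconst a ha] using h⟩
  · exact geometric_hahn_banach_of_nonempty_interior_point hK hx hint

theorem Convex.mem_interior_iff_forall_exists_lt {K : Set E} (hK : Convex ℝ K)
    (hne : K.Nonempty) {x : E} :
    x ∈ interior K ↔ ∀ f : StrongDual ℝ E, f ≠ 0 → ∃ a ∈ K, f x < f a := by
  refine ⟨fun hx f hf => ?_, fun h => by_contra fun hx => ?_⟩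
  · obtain ⟨v, hv⟩ : ∃ v, 0 < f v := by
      obtain ⟨v, hv⟩ := DFunLike.ne_iff.mp hf
      rcases (ne_iff_lt_or_gt.mp hv) with hv | hv
      · exact ⟨-v, by simpa using hv⟩
      · exact ⟨v, hv⟩
    have hlim : Filter.Tendsto (fun t : ℝ => x + t • v) (nhdsWithin 0 (Set.Ioi 0)) (nhds x) := by
      have : Filter.Tendsto (fun t : ℝ => x + t • v) (nhds 0) (nhds (x + (0 : ℝ) • v)) :=
        (continuous_const.add (continuous_id.smul continuous_const)).tendsto 0
      simpa using this.mono_left nhdsWithin_le_nhds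
    obtain ⟨t, htK, ht⟩ :=
      ((hlim.eventually (mem_interior_iff_mem_nhds.mp hx)).and self_mem_nhdsWithin).exists
    exact ⟨x + t • v, htK, by simpa using mul_pos ht hv⟩
  · obtain ⟨f, hf, hle⟩ := hK.exists_ne_zero_forall_le_of_notMem_interior hne hx
    obtain ⟨a, ha, hlt⟩ := h f hf
    exact (hle a ha).not_gt hlt

end Interior

section Lattice

open scoped Matrix

variable {d : ℕ}

def pairL (w : Fin d → ℤ) : RVec d →L[ℝ] ℝ := ∑ i, (w i : ℝ) • ContinuousLinearMap.proj i

theorem pairL_apply (w : Fin d → ℤ) (x : RVec d) : pairL w x = pairR w x := by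
  simp [pairL, pairR]

@[simp]
theorem pairL_toR (w u : Fin d → ℤ) : pairL w (toR u) = ((w ⬝ᵥ u : ℤ) : ℝ) := by
  simp [pairL, toR, dotProduct]

theorem toR_add (u v : Fin d → ℤ) : toR (u + v) = toR u + toR v := by
  ext i; simp [toR]

theorem toR_smul (a : ℤ) (u : Fin d → ℤ) : toR (a • u) = (a : ℝ) • toR u := by
  ext i; simp [toR]

theorem toR_neg (u : Fin d → ℤ) : toR (-u) = -toR u := by
  ext i; simp [toR]

theorem IsCompact.finite_setOf_toR_mem {K : Set (RVec d)} (hK : IsCompact K) :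
    {u : Fin d → ℤ | toR u ∈ K}.Finite :=
  isCompact_iff_finite.mp <|
    (Topology.IsClosedEmbedding.piMap fun _ => Int.isClosedEmbedding_coe_real).isCompact_preimage hK

theorem gcd_add_dotProduct_smul {w g : Fin d → ℤ} (hg : w ⬝ᵥ g = 0) (u : Fin d → ℤ) :
    Finset.univ.gcd (u + (w ⬝ᵥ u) • g) = Finset.univ.gcd u := by
  have hdvd_dot : ∀ (e : ℤ) (v : Fin d → ℤ), (∀ i, e ∣ v i) → e ∣ w ⬝ᵥ v := fun e v hv =>
    Finset.dvd_sum fun i _ => (hv i).mul_left _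
  have hdot : w ⬝ᵥ (u + (w ⬝ᵥ u) • g) = w ⬝ᵥ u := by
    rw [dotProduct_add, dotProduct_smul, hg, smul_zero, add_zero]
  refine dvd_antisymm_of_normalize_eq Finset.normalize_gcd Finset.normalize_gcd
    (Finset.dvd_gcd fun i _ => ?_) (Finset.dvd_gcd fun i _ => ?_)
  · have hu := hdvd_dot _ (u + (w ⬝ᵥ u) • g) fun j => Finset.gcd_dvd (Finset.mem_univ j)
    rw [hdot] at hu
    have hi := Finset.gcd_dvd (s := Finset.univ) (f := u + (w ⬝ᵥ u) • g) (Finset.mem_univ i)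
    simpa using dvd_sub hi (hu.mul_right (g i))
  · have hu := hdvd_dot _ u fun j => Finset.gcd_dvd (Finset.mem_univ j)
    simpa using dvd_add (Finset.gcd_dvd (Finset.mem_univ i)) (hu.mul_right (g i))

def IsPrimitivePoint (x : RVec d) : Prop := ∃ u, toR u = x ∧ IsPrimitive u

theorem IsPrimitivePoint.add_pairL_smul {w : Fin d → ℤ} {x f : RVec d} (hx : IsPrimitivePoint x)
    (hf : f ∈ Set.range toR) (hf0 : pairL w f = 0) : IsPrimitivePoint (x + pairL w x • f) := by
  obtain ⟨u, rfl, hu⟩ := hx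
  obtain ⟨g, rfl⟩ := hf
  have hg : w ⬝ᵥ g = 0 := by exact_mod_cast (pairL_toR w g).symm.trans hf0
  refine ⟨u + (w ⬝ᵥ u) • g, by rw [toR_add, toR_smul, pairL_toR], ?_⟩
  rwa [IsPrimitive, gcd_add_dotProduct_smul hg]

theorem IsPrimitivePoint.sub_pairL_smul {w : Fin d → ℤ} {x f : RVec d} (hx : IsPrimitivePoint x)
    (hf : f ∈ Set.range toR) (hf0 : pairL w f = 0) : IsPrimitivePoint (x - pairL w x • f) := by
  obtain ⟨g, rfl⟩ := hf
  have hneg := hx.add_pairL_smul (f := toR (-g)) ⟨-g, rfl⟩ (by rwa [toR_neg, map_neg, neg_eq_zero])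
  rwa [toR_neg, smul_neg, ← sub_eq_add_neg] at hneg

end Lattice

section Mutation

open scoped Matrix

variable {d : ℕ} {w : Fin d → ℤ} {P F : Set (RVec d)} {G : ℤ → Set (RVec d)}

theorem IsLatticePolytope.isPolytope (hP : IsLatticePolytope P) : IsPolytope P := by
  obtain ⟨S, -, rfl⟩ := hP
  exact ⟨_, S.finite_toSet.image toR, rfl⟩

theorem IsLatticePolytope.nonempty (hP : IsLatticePolytope P) : P.Nonempty := by
  obtain ⟨S, hS, rfl⟩ := hP
  exact convexHull_nonempty_iff.mpr ((Finset.coe_nonempty.mpr hS).image toR)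

theorem IsLatticePolytope.extremePoints_subset_range (hP : IsLatticePolytope P) :
    P.extremePoints ℝ ⊆ Set.range toR := by
  obtain ⟨S, -, rfl⟩ := hP
  exact extremePoints_convexHull_subset.trans (Set.image_subset_range _ _)

theorem heightSlice_subset (hP : Convex ℝ P) (h : ℤ) : heightSlice w h P ⊆ P :=
  convexHull_min (by rintro _ ⟨u, hu, rfl⟩; exact hu.1) hP

theorem pairL_eq_of_mem_heightSlice {h : ℤ} {x : RVec d} (hx : x ∈ heightSlice w h P) :
    pairL w x = h :=
  convexHull_min (by rintro _ ⟨u, hu, rfl⟩; exact (pairL_apply w (toR u)).trans hu.2)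
    (convex_hyperplane (pairL w).toLinearMap.isLinear _) hx

theorem toR_mem_heightSlice {u : Fin d → ℤ} (hu : toR u ∈ P) :
    toR u ∈ heightSlice w (w ⬝ᵥ u) P :=
  subset_convexHull ℝ _ ⟨u, ⟨hu, by rw [← pairL_apply, pairL_toR]⟩, rfl⟩

theorem isPolytope_heightSlice (hP : IsCompact P) (h : ℤ) : IsPolytope (heightSlice w h P) :=
  ⟨_, (hP.finite_setOf_toR_mem.subset fun _ hu => hu.1).image toR, rfl⟩

theorem finite_setOf_heightSlice_nonempty (hP : IsCompact P) :
    {h : ℤ | (heightSlice w h P).Nonempty}.Finite := by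
  refine (hP.finite_setOf_toR_mem.image (w ⬝ᵥ ·)).subset fun h hh => ?_
  obtain ⟨_, u, hu, rfl⟩ := convexHull_nonempty_iff.mp hh
  refine ⟨u, hu.1, ?_⟩
  have hheight := hu.2
  rw [← pairL_apply, pairL_toR] at hheight
  exact_mod_cast hheight

theorem subset_mutation {h : ℤ} (hh : h < 0) : G h ⊆ mutation w F G P := fun _ hx =>
  subset_convexHull ℝ _ (Or.inl (Set.mem_biUnion hh hx))

theorem add_smul_mem_mutation {n : ℕ} {s f : RVec d} (hs : s ∈ heightSlice w n P) (hf : f ∈ F) :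
    s + (n : ℝ) • f ∈ mutation w F G P :=
  subset_convexHull ℝ _
    (Or.inr (Set.mem_iUnion_of_mem n (Set.add_mem_add hs (Set.smul_mem_smul_set hf))))

theorem convex_mutation : Convex ℝ (mutation w F G P) :=
  convex_convexHull ℝ _

theorem mutation_subset {C : Set (RVec d)} (hC : Convex ℝ C) (hGC : ∀ h < 0, G h ⊆ C)
    (hSC : ∀ n : ℕ, ∀ s ∈ heightSlice w n P, ∀ f ∈ F, s + (n : ℝ) • f ∈ C) :
    mutation w F G P ⊆ C := by
  refine convexHull_min (Set.union_subset (Set.iUnion₂_subset hGC)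
    (Set.iUnion_subset fun n => ?_)) hC
  rintro _ ⟨s, hs, _, ⟨f, hf, rfl⟩, rfl⟩
  exact hSC n s hs f hf

theorem mem_extremePoints_mutation_cases {x : RVec d}
    (hx : x ∈ (mutation w F G P).extremePoints ℝ) :
    (∃ h < 0, x ∈ G h) ∨ ∃ n : ℕ, ∃ s ∈ heightSlice w n P, ∃ f ∈ F, x = s + (n : ℝ) • f := by
  rcases extremePoints_convexHull_subset hx with hx | hx
  · obtain ⟨h, hh, hx⟩ := Set.mem_iUnion₂.mp hx
    exact Or.inl ⟨h, hh, hx⟩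
  · obtain ⟨n, s, hs, _, ⟨f, hf, rfl⟩, rfl⟩ := Set.mem_iUnion.mp hx
    exact Or.inr ⟨n, s, hs, f, hf, rfl⟩

theorem IsMutationWitness.add_smul_mem_heightSlice (hG : IsMutationWitness w F G P) {h : ℤ}
    (hh : h < 0) {a f : RVec d} (ha : a ∈ G h) (hf : f ∈ F) :
    a + (-h : ℝ) • f ∈ heightSlice w h P :=
  (hG h hh).2.2 (Set.add_mem_add ha (Set.smul_mem_smul_set hf))

theorem IsMutationWitness.exists_eq_add_smul (hG : IsMutationWitness w F G P) {v : RVec d}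
    (hv : v ∈ P.extremePoints ℝ) {h : ℤ} (hh : h < 0) (hvh : pairL w v = h) :
    ∃ a ∈ G h, ∃ f ∈ F, v = a + (-h : ℝ) • f := by
  obtain ⟨a, ha, _, ⟨f, hf, rfl⟩, hv'⟩ := (hG h hh).2.1 ⟨hv, by rwa [← pairL_apply]⟩
  exact ⟨a, ha, f, hf, hv'.symm⟩

theorem isPolytope_mutation (hP : IsCompact P) (hF : IsPolytope F) (hFne : F.Nonempty)
    (hG : IsMutationWitness w F G P) : IsPolytope (mutation w F G P) := by
  have hheights := finite_setOf_heightSlice_nonempty (w := w) hP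
  have hempty : IsPolytope (∅ : Set (RVec d)) := ⟨∅, Set.finite_empty, convexHull_empty⟩
  have hhull : ∀ {K : Set (RVec d)}, IsPolytope K → IsPolytope (convexHull ℝ K) := fun hK => by
    rwa [hK.convex.convexHull_eq]
  rw [mutation, Set.union_eq_iUnion]
  refine isPolytope_convexHull_iUnion (fun b => ?_) (Set.toFinite _)
  cases b
  · refine isPolytope_convexHull_iUnion
      (fun n => hhull ((isPolytope_heightSlice hP n).add (hF.smul n))) ?_
    refine (hheights.preimage Nat.cast_injective.injOn).subset ?_
    rintro n ⟨_, s, hs, -⟩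
    exact ⟨s, hs⟩
  · refine isPolytope_convexHull_iUnion (fun h => ?_) (hheights.subset ?_)
    · by_cases hh : h < 0
      · simp only [hh, Set.iUnion_true]
        rcases (hG h hh).1 with hGe | hGl
        · rwa [hGe, convexHull_empty]
        · exact hhull hGl.isPolytope
      · simpa only [hh, Set.iUnion_false, convexHull_empty] using hempty
    · rintro h ⟨a, ha⟩
      obtain ⟨hh, ha⟩ := Set.mem_iUnion.mp ha
      obtain ⟨f, hf⟩ := hFne
      exact ⟨_, hG.add_smul_mem_heightSlice hh ha hf⟩

theorem forall_le_of_forall_mem_mutation_le (hPc : IsCompact P)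
    (hPlat : P.extremePoints ℝ ⊆ Set.range toR) (hG : IsMutationWitness w F G P)
    {y : StrongDual ℝ (RVec d)} {g : RVec d} (hg : g ∈ F) (hgy : IsMaxOn y F g) {c : ℝ}
    (hQ : ∀ q ∈ mutation w F G P, y q ≤ c) : ∀ p ∈ P, (y + y g • pairL w) p ≤ c := by
  intro p hp
  obtain ⟨v, hv, hvmax⟩ := hPc.exists_mem_extremePoints_isMaxOn ⟨p, hp⟩ (y + y g • pairL w)
  refine (hvmax hp).trans ?_
  obtain ⟨u, rfl⟩ := hPlat hv
  simp only [add_apply, smul_apply, smul_eq_mul, pairL_toR]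
  rcases le_or_gt 0 (w ⬝ᵥ u) with h0 | h0
  · obtain ⟨n, hn⟩ := Int.eq_ofNat_of_zero_le h0
    have hs := toR_mem_heightSlice (w := w) (extremePoints_subset hv)
    rw [hn] at hs
    have hq := hQ _ (add_smul_mem_mutation (G := G) hs hg)
    rw [map_add, map_smul, smul_eq_mul] at hq
    rw [hn]
    push_cast
    linarith
  · obtain ⟨a, ha, f, hf, hva⟩ := hG.exists_eq_add_smul hv h0 (pairL_toR w u)
    have hya := hQ a (subset_mutation h0 ha)
    have hyf : y f ≤ y g := hgy hf
    have hneg : ((w ⬝ᵥ u : ℤ) : ℝ) < 0 := by exact_mod_cast h0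
    rw [hva, map_add, map_smul, smul_eq_mul]
    nlinarith

theorem forall_mem_mutation_le_of_forall_le (hPconv : Convex ℝ P)
    (hG : IsMutationWitness w F G P) {y : StrongDual ℝ (RVec d)} {g : RVec d} (hg : g ∈ F)
    (hgy : IsMaxOn y F g) {c : ℝ} (hP : ∀ p ∈ P, (y + y g • pairL w) p ≤ c) :
    ∀ q ∈ mutation w F G P, y q ≤ c := by
  refine mutation_subset (convex_halfSpace_le y.toLinearMap.isLinear c)
    (fun h hh a ha => ?_) (fun n s hs f hf => ?_)
  · have hp := hG.add_smul_mem_heightSlice hh ha hg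
    have hψp := hP _ (heightSlice_subset hPconv h hp)
    rw [add_apply, smul_apply, smul_eq_mul, pairL_eq_of_mem_heightSlice hp, map_add, map_smul,
      smul_eq_mul] at hψp
    change y a ≤ c
    linarith
  · have hψs := hP s (heightSlice_subset hPconv n hs)
    rw [add_apply, smul_apply, smul_eq_mul, pairL_eq_of_mem_heightSlice hs] at hψs
    have hyf : y f ≤ y g := hgy hf
    change y (s + (n : ℝ) • f) ≤ c
    rw [map_add, map_smul, smul_eq_mul]
    push_cast at hψs
    nlinarith [n.cast_nonneg (α := ℝ)]

theorem forall_mem_mutation_le_iff (hPc : IsCompact P) (hPconv : Convex ℝ P)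
    (hPlat : P.extremePoints ℝ ⊆ Set.range toR) (hG : IsMutationWitness w F G P)
    {y : StrongDual ℝ (RVec d)} {g : RVec d} (hg : g ∈ F) (hgy : IsMaxOn y F g) (c : ℝ) :
    (∀ q ∈ mutation w F G P, y q ≤ c) ↔ ∀ p ∈ P, (y + y g • pairL w) p ≤ c :=
  ⟨forall_le_of_forall_mem_mutation_le hPc hPlat hG hg hgy,
    forall_mem_mutation_le_of_forall_le hPconv hG hg hgy⟩

theorem mutation_nonempty (hPc : IsCompact P) (hPconv : Convex ℝ P)
    (hPlat : P.extremePoints ℝ ⊆ Set.range toR) (hG : IsMutationWitness w F G P)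
    (hPne : P.Nonempty) (hFne : F.Nonempty) : (mutation w F G P).Nonempty := by
  obtain ⟨g, hg⟩ := hFne
  obtain ⟨p, hp⟩ := hPne
  by_contra hQ
  -- duality for the zero functional: an empty mutation would give `0 ≤ -1` on `P`
  have hcontra := (forall_mem_mutation_le_iff hPc hPconv hPlat hG (y := 0) hg
    (fun _ _ => by simp) (-1)).mp (fun q hq => (hQ ⟨q, hq⟩).elim) p hp
  norm_num at hcontra

theorem exists_add_smul_pairL_eq (hFc : IsCompact F) (hFne : F.Nonempty)
    (hF0 : ∀ f ∈ F, pairL w f = 0) (z : StrongDual ℝ (RVec d)) :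
    ∃ y : StrongDual ℝ (RVec d), ∃ g ∈ F.extremePoints ℝ, IsMaxOn y F g ∧
      y + y g • pairL w = z := by
  obtain ⟨g, hg, hgz⟩ := hFc.exists_mem_extremePoints_isMaxOn hFne z
  have hyF : ∀ f ∈ F, (z - z g • pairL w) f = z f := fun f hf => by simp [hF0 f hf]
  refine ⟨z - z g • pairL w, g, hg, fun f hf => ?_, ?_⟩
  · change (z - z g • pairL w) f ≤ (z - z g • pairL w) g
    rw [hyF f hf, hyF g (extremePoints_subset hg)]
    exact hgz hf
  · rw [hyF g (extremePoints_subset hg)]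
    exact sub_add_cancel _ _

theorem exists_eq_add_smul_of_mem_exposedPoints_mutation (hPc : IsCompact P)
    (hPconv : Convex ℝ P) (hPne : P.Nonempty) (hPlat : P.extremePoints ℝ ⊆ Set.range toR)
    (hFc : IsCompact F) (hFne : F.Nonempty) (hG : IsMutationWitness w F G P) {x : RVec d}
    (hx : x ∈ (mutation w F G P).exposedPoints ℝ) :
    ∃ v ∈ P.extremePoints ℝ, ∃ f ∈ F.extremePoints ℝ, x = v + pairL w v • f := by
  obtain ⟨hxQ, y, hy⟩ := hx
  obtain ⟨g, hg, hgy⟩ := hFc.exists_mem_extremePoints_isMaxOn hFne y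
  have hdual := forall_mem_mutation_le_iff hPc hPconv hPlat hG (extremePoints_subset hg) hgy
  obtain ⟨v, hv, hvmax⟩ := hPc.exists_mem_extremePoints_isMaxOn hPne (y + y g • pairL w)
  have hψv : (y + y g • pairL w) v = y x :=
    le_antisymm ((hdual _).mp (fun q hq => (hy q hq).1) v (extremePoints_subset hv))
      ((hdual _).mpr hvmax x hxQ)
  obtain ⟨u, rfl⟩ := hPlat hv
  simp only [add_apply, smul_apply, smul_eq_mul, pairL_toR] at hψv
  refine ⟨toR u, hv, ?_⟩
  rw [pairL_toR]
  rcases le_or_gt 0 (w ⬝ᵥ u) with h0 | h0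
  · obtain ⟨n, hn⟩ := Int.eq_ofNat_of_zero_le h0
    have hs := toR_mem_heightSlice (w := w) (extremePoints_subset hv)
    rw [hn] at hs
    have hmem := add_smul_mem_mutation (G := G) hs (extremePoints_subset hg)
    refine ⟨g, hg, ((hy _ hmem).2 ?_).symm.trans (by rw [hn]; push_cast; rfl)⟩
    rw [map_add, map_smul, smul_eq_mul]
    rw [hn] at hψv
    push_cast at hψv
    linarith
  · obtain ⟨a, ha, f, hf, hva⟩ := hG.exists_eq_add_smul hv h0 (pairL_toR w u)
    have hyf : y f ≤ y g := hgy hf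
    have hneg : ((w ⬝ᵥ u : ℤ) : ℝ) < 0 := by exact_mod_cast h0
    have hax : a = x := (hy a (subset_mutation h0 ha)).2 (by
      rw [hva, map_add, map_smul, smul_eq_mul] at hψv
      nlinarith)
    have hfex : f ∈ F.extremePoints ℝ :=
      mem_extremePoints_of_add_smul_mem (neg_ne_zero.mpr hneg.ne)
        (fun f' hf' => heightSlice_subset hPconv _ (hG.add_smul_mem_heightSlice h0 ha hf'))
        hf (hva ▸ hv)
    refine ⟨f, hfex, ?_⟩
    rw [← hax, hva]
    module

theorem exists_eq_sub_smul_of_mem_exposedPoints (hPc : IsCompact P) (hPconv : Convex ℝ P)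
    (hPlat : P.extremePoints ℝ ⊆ Set.range toR) (hFc : IsCompact F) (hFne : F.Nonempty)
    (hF0 : ∀ f ∈ F, pairL w f = 0) (hG : IsMutationWitness w F G P)
    (hQc : IsCompact (mutation w F G P)) {x : RVec d} (hx : x ∈ P.exposedPoints ℝ) :
    ∃ q ∈ (mutation w F G P).extremePoints ℝ, ∃ f ∈ F.extremePoints ℝ,
      x = q - pairL w q • f := by
  obtain ⟨hxP, z, hz⟩ := hx
  obtain ⟨y, g, hg, hgy, hψ⟩ := exists_add_smul_pairL_eq hFc hFne hF0 z
  have hdual := forall_mem_mutation_le_iff hPc hPconv hPlat hG (extremePoints_subset hg) hgy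
  rw [hψ] at hdual
  obtain ⟨q, hq, hqmax⟩ := hQc.exists_mem_extremePoints_isMaxOn
    (mutation_nonempty hPc hPconv hPlat hG ⟨x, hxP⟩ hFne) y
  have hyq : y q = z x := le_antisymm
    ((hdual _).mpr (fun p hp => (hz p hp).1) q (extremePoints_subset hq))
    ((hdual _).mp hqmax x hxP)
  have hzψ : ∀ p, z p = y p + y g * pairL w p := fun p => by
    rw [← hψ, add_apply, smul_apply, smul_eq_mul]
  refine ⟨q, hq, ?_⟩
  rcases mem_extremePoints_mutation_cases hq with ⟨h, hh, hqG⟩ | ⟨n, s, hs, f, hf, rfl⟩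
  · have hp := hG.add_smul_mem_heightSlice hh hqG (extremePoints_subset hg)
    have hph := pairL_eq_of_mem_heightSlice hp
    have hpx : q + (-h : ℝ) • g = x := (hz _ (heightSlice_subset hPconv h hp)).2 (by
      rw [← hyq, hzψ, hph, map_add, map_smul, smul_eq_mul]
      linarith)
    rw [map_add, map_smul, hF0 g (extremePoints_subset hg), smul_zero, add_zero] at hph
    exact ⟨g, hg, by rw [← hpx, hph]; module⟩
  · have hyf : y f ≤ y g := hgy hf
    have hsx : s = x := (hz s (heightSlice_subset hPconv n hs)).2 (by
      rw [← hyq, hzψ, pairL_eq_of_mem_heightSlice hs, map_add, map_smul, smul_eq_mul]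
      push_cast
      nlinarith [n.cast_nonneg (α := ℝ)])
    subst hsx
    have hqn : pairL w (s + (n : ℝ) • f) = n := by
      rw [map_add, map_smul, pairL_eq_of_mem_heightSlice hs, hF0 f hf, smul_zero, add_zero]
      push_cast
      rfl
    rw [hqn]
    rcases n.eq_zero_or_pos with rfl | hn
    · exact ⟨g, hg, by simp⟩
    · have hfex : f ∈ F.extremePoints ℝ :=
        mem_extremePoints_of_add_smul_mem (by positivity)
          (fun f' hf' => add_smul_mem_mutation hs hf') hf hq
      exact ⟨f, hfex, by simp⟩

theorem zero_mem_interior_mutation_iff (hPc : IsCompact P) (hPconv : Convex ℝ P)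
    (hPne : P.Nonempty) (hPlat : P.extremePoints ℝ ⊆ Set.range toR) (hFc : IsCompact F)
    (hFne : F.Nonempty) (hF0 : ∀ f ∈ F, pairL w f = 0) (hG : IsMutationWitness w F G P) :
    (0 : RVec d) ∈ interior P ↔ (0 : RVec d) ∈ interior (mutation w F G P) := by
  rw [hPconv.mem_interior_iff_forall_exists_lt hPne,
    convex_mutation.mem_interior_iff_forall_exists_lt
      (mutation_nonempty hPc hPconv hPlat hG hPne hFne)]
  simp only [map_zero]
  constructor
  · intro hP y hy
    obtain ⟨g, hg, hgy⟩ := hFc.exists_isMaxOn hFne y.continuous.continuousOn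
    by_contra! hQ
    have hψ : y + y g • pairL w ≠ 0 := fun h0 => hy (by
      have hyg : y g = 0 := by simpa [hF0 g hg] using congrArg (· g) h0
      simpa [hyg] using h0)
    obtain ⟨p, hp, hpos⟩ := hP _ hψ
    exact ((forall_mem_mutation_le_iff hPc hPconv hPlat hG hg hgy 0).mp hQ p hp).not_gt hpos
  · intro hQ z hz
    obtain ⟨y, g, hg, hgy, hψ⟩ := exists_add_smul_pairL_eq hFc hFne hF0 z
    by_contra! hP
    obtain ⟨q, hq, hpos⟩ := hQ y fun h0 => hz (by simp [← hψ, h0])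
    rw [← hψ] at hP
    exact ((forall_mem_mutation_le_iff hPc hPconv hPlat hG (extremePoints_subset hg) hgy 0).mpr
      hP q hq).not_gt hpos

end Mutation

theorem isFano_iff_isFano_mutation_general {d : ℕ} (P : Set (RVec d))
    (hP : IsLatticePolytope P) (w : Fin d → ℤ)
    (F : Set (RVec d)) (hF : IsFactorShape w F)
    (G : ℤ → Set (RVec d)) (hG : IsMutationWitness w F G P) :
    IsFano P ↔ IsFano (mutation w F G P) := by
  have hPc := hP.isPolytope.isCompact
  have hPconv := hP.isPolytope.convex
  have hPlat := hP.extremePoints_subset_range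
  have hFc := hF.1.isPolytope.isCompact
  have hFne := hF.1.nonempty
  have hFlat := hF.1.extremePoints_subset_range
  have hF0 : ∀ f ∈ F, pairL w f = 0 := fun f hf => (pairL_apply w f).trans (hF.2 f hf)
  have hQ := isPolytope_mutation hPc hF.1.isPolytope hFne hG
  refine and_congr (zero_mem_interior_mutation_iff hPc hPconv hP.nonempty hPlat hFc hFne hF0 hG)
    ⟨fun hPv x hx => ?_, fun hQv x hx => ?_⟩
  · obtain ⟨v, hv, f, hf, rfl⟩ := exists_eq_add_smul_of_mem_exposedPoints_mutation hPc hPconv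
      hP.nonempty hPlat hFc hFne hG (hQ.extremePoints_subset_exposedPoints hx)
    exact IsPrimitivePoint.add_pairL_smul (hPv v hv) (hFlat hf) (hF0 f (extremePoints_subset hf))
  · obtain ⟨q, hq, f, hf, rfl⟩ := exists_eq_sub_smul_of_mem_exposedPoints hPc hPconv hPlat hFc
      hFne hF0 hG hQ.isCompact (hP.isPolytope.extremePoints_subset_exposedPoints hx)
    exact IsPrimitivePoint.sub_pairL_smul (hQv q hq) (hFlat hf) (hF0 f (extremePoints_subset hf))

/-- A lattice polytope `P` is Fano if and only if its combinatorial mutation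
`mut_w(P, F)` is Fano. -/
theorem isFano_iff_isFano_mutation {d : ℕ} (P : Set (RVec d))
    (hP : IsLatticePolytope P) (w : Fin d → ℤ) (hw : IsPrimitive w)
    (F : Set (RVec d)) (hF : IsFactorShape w F)
    (G : ℤ → Set (RVec d)) (hG : IsMutationWitness w F G P) :
    IsFano P ↔ IsFano (mutation w F G P) :=
  isFano_iff_isFano_mutation_general P hP w F hF G hG
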